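/- Let θ : ℤ → {0,1} be an on/off schedule, define the start-up indicator τₜ = θₜ · (1 − θₜ₋₁), and fix a minimum up-time MT ∈ ℕ. If the minimum up-time constraint θₜ ≥ Σ_{s=1}^{MT} τ_{t−s} holds for every time step t, then whenever a start-up occurs at some time t₀ (i.e., τ_{t₀} = 1), the unit remains committed for the following MT steps: θₜ = 1 for all t with t₀ ≤ t ≤ t₀ + MT. -/
import Mathlib

/-- Minimum up-time: let `θ : ℤ → {0,1}` be an on/off schedule, let the start-up
indicator be `τ t = θ t * (1 - θ (t-1))`, and let `MT ∈ ℕ` be the minimum up-time.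
If the constraint `θ t ≥ ∑_{s=1}^{MT} τ (t - s)` holds for every time step `t`,
then whenever a start-up occurs at some time `t₀` (i.e. `τ t₀ = 1`), the unit
remains committed for the following `MT` steps: `θ t = 1` for all
`t₀ ≤ t ≤ t₀ + MT`. -/
theorem min_uptime_constraint_enforces_commitment
    (θ : ℤ → ℤ) (hθ : ∀ t, θ t = 0 ∨ θ t = 1)
    (τ : ℤ → ℤ) (hτ : ∀ t, τ t = θ t * (1 - θ (t - 1)))
    (MT : ℕ)
    (hmin : ∀ t : ℤ, θ t ≥ ∑ s ∈ Finset.Icc 1 MT, τ (t - (s : ℤ)))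
    (t₀ : ℤ) (hstart : τ t₀ = 1) :
    ∀ t : ℤ, t₀ ≤ t → t ≤ t₀ + (MT : ℤ) → θ t = 1 := by
  have hτnn : ∀ t, 0 ≤ τ t := by
    intro t
    rw [hτ t]
    rcases hθ t with h | h <;> rcases hθ (t - 1) with h' | h' <;> simp [h, h']
  intro t ht1 ht2
  rcases eq_or_lt_of_le ht1 with heq | hlt
  · -- t = t₀ : τ t₀ = 1 forces θ t₀ = 1
    rw [← heq]
    rw [hτ t₀] at hstart
    rcases hθ t₀ with h | h
    · simp [h] at hstart
    · exact h
  · -- t₀ < t ≤ t₀ + MT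
    set s₀ : ℕ := (t - t₀).toNat with hs₀
    have hst : (s₀ : ℤ) = t - t₀ := Int.toNat_of_nonneg (by omega)
    have hmem : s₀ ∈ Finset.Icc 1 MT := by
      rw [Finset.mem_Icc]
      omega
    have hsum : τ (t - (s₀ : ℤ)) ≤ ∑ s ∈ Finset.Icc 1 MT, τ (t - (s : ℤ)) :=
      Finset.single_le_sum (fun i _ => hτnn _) hmem
    have : τ (t - (s₀ : ℤ)) = 1 := by
      rw [hst]
      simpa using hstart
    have h1 : (1 : ℤ) ≤ θ t := by
      have := hmin t
      omega
    rcases hθ t with h | h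
    · omega
    · exact h
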